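/- arXiv:2605.18319 — 9 statements merged into one kernel-verified Lean document; each statement's English description precedes it below -/
import Mathlib

section
/- Let θ = (W1, b1, W2, b2, W3, b3) be a parameter of a three-layer ReLU network with architecture (d, n1, n2, m) that hides hyperplane j ∈ [n1]. Let t ∈ ℝ satisfy t·W2_{ij} ≥ b2_i for every i ∈ [n2] (equivalently, since W2_{ij} > 0, t ≥ max_{i∈[n2]} b2_i / W2_{ij}). Then the translated parameter η = (W1, b1 + t·e_j, W2, b2 − t·W2_{:,j}, W3, b3), where e_j ∈ ℝ^{n1} is the j-th standard basis vector and W2_{:,j} ∈ ℝ^{n2} is the j-th column of W2, realizes the same function: f_η(x) = f_θ(x) for all x ∈ ℝ^d. -/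
open Matrix

noncomputable section

/-- Entrywise ReLU. -/
def relu {n : ℕ} (x : Fin n → ℝ) : Fin n → ℝ := fun i => max (x i) 0

/-- Realization of a three-layer ReLU network with architecture (d, n1, n2, m). -/
def net3 {d n1 n2 m : ℕ}
    (W1 : Matrix (Fin n1) (Fin d) ℝ) (b1 : Fin n1 → ℝ)
    (W2 : Matrix (Fin n2) (Fin n1) ℝ) (b2 : Fin n2 → ℝ)
    (W3 : Matrix (Fin m) (Fin n2) ℝ) (b3 : Fin m → ℝ)
    (x : Fin d → ℝ) : Fin m → ℝ :=
  W3 *ᵥ relu (W2 *ᵥ relu (W1 *ᵥ x + b1) + b2) + b3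

/-- translating a hidden hyperplane `j` (with the compensating shift of the
second-layer biases) does not change the realized function. -/
theorem translated_hidden_hyperplane_same_function {d n1 n2 m : ℕ}
    (W1 : Matrix (Fin n1) (Fin d) ℝ) (b1 : Fin n1 → ℝ)
    (W2 : Matrix (Fin n2) (Fin n1) ℝ) (b2 : Fin n2 → ℝ)
    (W3 : Matrix (Fin m) (Fin n2) ℝ) (b3 : Fin m → ℝ)
    (j : Fin n1)
    (hiding_pos : ∀ i : Fin n2, 0 < W2 i j)
    (hiding_neg : ∀ i : Fin n2, ∀ k : Fin n1, k ≠ j → W2 i k ≤ 0)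
    (hiding_bias : ∀ i : Fin n2, b2 i ≤ 0)
    (t : ℝ) (ht : ∀ i : Fin n2, b2 i ≤ t * W2 i j) :
    ∀ x : Fin d → ℝ,
      net3 W1 (b1 + t • (Pi.single j 1 : Fin n1 → ℝ)) W2 (b2 - t • (fun i => W2 i j)) W3 b3 x
        = net3 W1 b1 W2 b2 W3 b3 x := by
  intro x
  unfold net3
  set y := W1 *ᵥ x + b1 with hy
  have hyrw : W1 *ᵥ x + (b1 + t • (Pi.single j 1 : Fin n1 → ℝ))
      = y + t • (Pi.single j 1 : Fin n1 → ℝ) := by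
    rw [hy]; abel
  rw [hyrw]
  have key : relu (W2 *ᵥ relu (y + t • (Pi.single j 1 : Fin n1 → ℝ))
      + (b2 - t • (fun i => W2 i j))) = relu (W2 *ᵥ relu y + b2) := by
    funext i
    simp only [relu, Pi.add_apply, Pi.sub_apply, Pi.smul_apply, Matrix.mulVec,
      dotProduct, smul_eq_mul]
    rw [← Finset.sum_erase_add _ _ (Finset.mem_univ j),
        ← Finset.sum_erase_add _ _ (Finset.mem_univ j)]
    have hsum : ∑ k ∈ Finset.univ.erase j,
        W2 i k * max (y k + t * (Pi.single j 1 : Fin n1 → ℝ) k) 0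
        = ∑ k ∈ Finset.univ.erase j, W2 i k * max (y k) 0 := by
      apply Finset.sum_congr rfl
      intro k hk
      have : (Pi.single j 1 : Fin n1 → ℝ) k = 0 :=
        Pi.single_eq_of_ne (Finset.ne_of_mem_erase hk) 1
      simp [this]
    rw [hsum]
    set S := ∑ k ∈ Finset.univ.erase j, W2 i k * max (y k) 0 with hSdef
    have hS : S ≤ 0 := by
      apply Finset.sum_nonpos
      intro k hk
      exact mul_nonpos_of_nonpos_of_nonneg (hiding_neg i k (Finset.ne_of_mem_erase hk))
        (le_max_right _ _)
    have hsingle : (Pi.single j 1 : Fin n1 → ℝ) j = 1 := Pi.single_eq_same j 1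
    rw [hsingle]
    have hW : 0 < W2 i j := hiding_pos i
    have hb : b2 i ≤ 0 := hiding_bias i
    have htW : b2 i ≤ t * W2 i j := ht i
    rcases le_or_gt 0 (y j) with h1 | h1 <;> rcases le_or_gt 0 (y j + t) with h2 | h2
    · rw [max_eq_left h1, max_eq_left (by linarith : (0:ℝ) ≤ y j + t * 1)]
      congr 1; ring
    · rw [max_eq_left h1, max_eq_right (by linarith : y j + t * 1 ≤ 0)]
      rw [max_eq_right (by nlinarith : S + W2 i j * 0 + (b2 i - t * W2 i j) ≤ 0),
          max_eq_right (by nlinarith : S + W2 i j * (y j) + b2 i ≤ 0)]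
    · rw [max_eq_right h1.le, max_eq_left (by linarith : (0:ℝ) ≤ y j + t * 1)]
      rw [max_eq_right (by nlinarith : S + W2 i j * (y j + t * 1) + (b2 i - t * W2 i j) ≤ 0),
          max_eq_right (by nlinarith : S + W2 i j * 0 + b2 i ≤ 0)]
    · rw [max_eq_right h1.le, max_eq_right (by linarith : y j + t * 1 ≤ 0)]
      rw [max_eq_right (by nlinarith : S + W2 i j * 0 + (b2 i - t * W2 i j) ≤ 0),
          max_eq_right (by nlinarith : S + W2 i j * 0 + b2 i ≤ 0)]
  rw [key]
end
end

section
/- Let θ = (W1, b1, W2, b2, W3, b3) be a parameter of a three-layer ReLU network with architecture (d, n1, 1, m) (a single second-layer neuron) that is normalized and hides hyperplane j ∈ [n1], i.e., W2 ∈ ℝ^{1×n1} satisfies W2_{1j} = 1 and W2_{1k} = −1 for all k ≠ j, and b2 = −1. Then for every subset I ⊆ [n1]∖{j}, the parameter M_I·θ = (M_I·W1, M_I·b1, W2, b2, W3, b3) realizes the same function: f_{M_I·θ}(x) = f_θ(x) for all x ∈ ℝ^d. -/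
open Matrix

noncomputable section

/-- The flip matrix `M_I = I − Σ_{k∈I} e_j e_kᵀ − 2 Σ_{k∈I} e_k e_kᵀ`. -/
def Mflip {n1 : ℕ} (j : Fin n1) (I : Finset (Fin n1)) : Matrix (Fin n1) (Fin n1) ℝ :=
  1 - (∑ k ∈ I, Matrix.single j k (1 : ℝ))
    - (2 : ℝ) • (∑ k ∈ I, Matrix.single k k (1 : ℝ))

/-! Write `z = W1 x + b1` and `S = Σ_{k∈I} z_k`. The flip sends `z_j ↦ z_j - S` and `z_k ↦ -z_k`
for `k ∈ I`; since `[-t]_+ = [t]_+ - t`, it lowers `Σ_{k≠j} [z_k]_+` by exactly `S`. The single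
second-layer neuron computes `[[z_j]_+ - a]_+` with `a = Σ_{k≠j} [z_k]_+ + 1 ≥ 0`, which equals
`[z_j - a]_+`, and `z_j - a` is unchanged by the flip. -/

lemma max_neg_zero_eq (t : ℝ) : max (-t) 0 = max t 0 - t := by
  rcases le_total t 0 with h | h
  · rw [max_eq_left (by linarith), max_eq_right h]; ring
  · rw [max_eq_right (by linarith), max_eq_left h]; ring

lemma max_sub_max_zero_of_nonneg {a : ℝ} (ha : 0 ≤ a) (y : ℝ) :
    max (max y 0 - a) 0 = max (y - a) 0 := by
  rw [← max_sub_sub_right, max_assoc, max_eq_right (by linarith : 0 - a ≤ 0)]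

section Mflip

variable {n : ℕ} (j : Fin n) (I : Finset (Fin n)) (v : Fin n → ℝ)

lemma Mflip_mulVec_apply (i : Fin n) :
    (Mflip j I *ᵥ v) i
      = v i - (if i = j then ∑ k ∈ I, v k else 0) - 2 * (if i ∈ I then v i else 0) := by
  simp only [Mflip, sub_mulVec, smul_mulVec, one_mulVec, Matrix.sum_mulVec, single_mulVec,
    one_mul, Pi.sub_apply, Pi.smul_apply, Finset.sum_apply, smul_eq_mul]
  simp [Function.update_apply, Finset.sum_ite_irrel, Finset.sum_ite_eq]

variable {j I}

lemma Mflip_mulVec_apply_self (hI : j ∉ I) : (Mflip j I *ᵥ v) j = v j - ∑ k ∈ I, v k := by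
  simp [Mflip_mulVec_apply, hI]

lemma sum_relu_Mflip_mulVec (hI : j ∉ I) :
    ∑ k ∈ Finset.univ.erase j, relu (Mflip j I *ᵥ v) k
      = ∑ k ∈ Finset.univ.erase j, relu v k - ∑ k ∈ I, v k := by
  have hrelu : ∀ k ∈ Finset.univ.erase j,
      relu (Mflip j I *ᵥ v) k = relu v k - if k ∈ I then v k else 0 := by
    intro k hk
    have hkj : k ≠ j := Finset.ne_of_mem_erase hk
    by_cases hkI : k ∈ I
    · have hflip : (Mflip j I *ᵥ v) k = -v k := by
        rw [Mflip_mulVec_apply, if_neg hkj, if_pos hkI]; ring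
      rw [relu, hflip, max_neg_zero_eq, if_pos hkI, relu]
    · rw [relu, Mflip_mulVec_apply, if_neg hkj, if_neg hkI, relu]; ring_nf
  have hIsub : Finset.univ.erase j ∩ I = I := Finset.inter_eq_right.mpr fun k hk =>
    Finset.mem_erase.mpr ⟨ne_of_mem_of_not_mem hk hI, Finset.mem_univ k⟩
  rw [Finset.sum_congr rfl hrelu, Finset.sum_sub_distrib, Finset.sum_ite_mem, hIsub]

end Mflip

section HiddenNeuron

variable {n : ℕ} {W : Matrix (Fin 1) (Fin n) ℝ} {b : Fin 1 → ℝ} {j : Fin n}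

lemma mulVec_apply_zero_of_hides (hWj : W 0 j = 1) (hWk : ∀ k, k ≠ j → W 0 k = -1)
    (w : Fin n → ℝ) : (W *ᵥ w) 0 = w j - ∑ k ∈ Finset.univ.erase j, w k := by
  have hsum : ∑ k ∈ Finset.univ.erase j, W 0 k * w k = -∑ k ∈ Finset.univ.erase j, w k := by
    rw [← Finset.sum_neg_distrib]
    exact Finset.sum_congr rfl fun k hk => by rw [hWk k (Finset.ne_of_mem_erase hk)]; ring
  rw [mulVec, dotProduct, ← Finset.add_sum_erase _ _ (Finset.mem_univ j), hsum, hWj]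
  ring

lemma relu_hidden_neuron (hWj : W 0 j = 1) (hWk : ∀ k, k ≠ j → W 0 k = -1) (hb : b 0 = -1)
    (v : Fin n → ℝ) :
    relu (W *ᵥ relu v + b)
      = fun _ => max (v j - (∑ k ∈ Finset.univ.erase j, relu v k + 1)) 0 := by
  have ha : 0 ≤ ∑ k ∈ Finset.univ.erase j, relu v k + 1 :=
    add_nonneg (Finset.sum_nonneg fun _ _ => le_max_right _ _) zero_le_one
  funext i
  rw [Subsingleton.elim i 0, ← max_sub_max_zero_of_nonneg ha]
  simp only [relu, Pi.add_apply, mulVec_apply_zero_of_hides hWj hWk, hb]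
  ring_nf

end HiddenNeuron

/-- for a normalized parameter with a single second-layer neuron that hides
hyperplane `j`, the discrete sign-flip symmetry `M_I` does not change the realized function. -/
theorem flip_hidden_hyperplane_same_function {d n1 m : ℕ}
    (W1 : Matrix (Fin n1) (Fin d) ℝ) (b1 : Fin n1 → ℝ)
    (W2 : Matrix (Fin 1) (Fin n1) ℝ) (b2 : Fin 1 → ℝ)
    (W3 : Matrix (Fin m) (Fin 1) ℝ) (b3 : Fin m → ℝ)
    (j : Fin n1)
    (hWj : W2 0 j = 1)
    (hWk : ∀ k : Fin n1, k ≠ j → W2 0 k = -1)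
    (hb2 : b2 0 = -1)
    (I : Finset (Fin n1)) (hI : j ∉ I) :
    ∀ x : Fin d → ℝ,
      net3 (Mflip j I * W1) (Mflip j I *ᵥ b1) W2 b2 W3 b3 x
        = net3 W1 b1 W2 b2 W3 b3 x := by
  intro x
  have hpre : (Mflip j I * W1) *ᵥ x + Mflip j I *ᵥ b1 = Mflip j I *ᵥ (W1 *ᵥ x + b1) := by
    rw [mulVec_add, mulVec_mulVec]
  rw [net3, net3, hpre, relu_hidden_neuron hWj hWk hb2, relu_hidden_neuron hWj hWk hb2,
    Mflip_mulVec_apply_self _ hI, sum_relu_Mflip_mulVec _ hI]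
  ring_nf

end
end

section
/- Fix n1 ≥ 1 and j ∈ [n1]. For all subsets I, J ⊆ [n1]∖{j}, the matrices M_I satisfy M_I · M_J = M_{I△J}, where I△J denotes the symmetric difference. In particular, each M_I is an involution (M_I² = I_{n1}), and the set G_j = { M_I : I ⊆ [n1]∖{j} } is a finite abelian group under matrix multiplication. -/
/-!
Write `M_I = 1 - A_I - 2 D_I` with `A_I = ∑_{k∈I} e_j e_kᵀ` and `D_I = ∑_{k∈I} e_k e_kᵀ`. Since
`j ∉ I`, column `j` of `A_I` and of `D_I` vanishes, so both kill `A_J` from the left, while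
right multiplication by the coordinate projection `D_J` keeps exactly the columns in `J`:
`A_I D_J = A_{I∩J}` and `D_I D_J = D_{I∩J}`. Expanding the product and using
`∑_{I△J} = ∑_I + ∑_J - 2 ∑_{I∩J}` gives `M_I M_J = M_{I△J}`.
-/

open Matrix

noncomputable section

theorem Finset.sum_symmDiff_add_two_nsmul_sum_inter {ι M : Type*} [DecidableEq ι]
    [AddCommMonoid M] (I J : Finset ι) (f : ι → M) :
    ∑ k ∈ symmDiff I J, f k + 2 • ∑ k ∈ I ∩ J, f k = ∑ k ∈ I, f k + ∑ k ∈ J, f k := by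
  have hdisj : Disjoint (symmDiff I J) (I ∩ J) := disjoint_symmDiff_inf I J
  rw [two_nsmul, ← add_assoc, ← Finset.sum_union hdisj,
    ← Finset.sum_union_inter (s₁ := I) (s₂ := J)]
  congr 2
  exact symmDiff_sup_inf I J

namespace Matrix

variable {n R : Type*} [Fintype n] [DecidableEq n] [Semiring R]

theorem single_mul_sum_single_diag (i k : n) (c : R) (J : Finset n) :
    single i k c * ∑ l ∈ J, single l l 1 = if k ∈ J then single i k c else 0 := by
  rw [Finset.mul_sum]
  split_ifs with hk
  · rw [Finset.sum_eq_single_of_mem k hk fun l _ hlk =>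
        single_mul_single_of_ne _ _ _ _ hlk.symm _,
      single_mul_single_same, mul_one]
  · exact Finset.sum_eq_zero fun l hl =>
      single_mul_single_of_ne _ _ _ _ (ne_of_mem_of_not_mem hl hk).symm _

theorem sum_single_mul_sum_single_diag (f : n → n) (I J : Finset n) :
    (∑ k ∈ I, single (f k) k (1 : R)) * ∑ l ∈ J, single l l 1 =
      ∑ k ∈ I ∩ J, single (f k) k 1 := by
  simp only [Finset.sum_mul, single_mul_sum_single_diag, Finset.sum_ite_mem]

theorem sum_single_mul_sum_single_eq_zero (f : n → n) {I : Finset n} {j : n} (hj : j ∉ I)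
    (g : n → R) (J : Finset n) :
    (∑ k ∈ I, single (f k) k (1 : R)) * ∑ l ∈ J, single j l (g l) = 0 := by
  rw [Finset.sum_mul_sum]
  refine Finset.sum_eq_zero fun k hk => Finset.sum_eq_zero fun l _ => ?_
  exact single_mul_single_of_ne _ _ _ _ (ne_of_mem_of_not_mem hk hj) _

end Matrix

theorem Mflip_mul_Mflip {n1 : ℕ} (j : Fin n1) {I : Finset (Fin n1)} (hI : j ∉ I)
    (J : Finset (Fin n1)) : Mflip j I * Mflip j J = Mflip j (symmDiff I J) := by
  have hA := eq_sub_of_add_eq <|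
    Finset.sum_symmDiff_add_two_nsmul_sum_inter I J fun k => single j k (1 : ℝ)
  have hD := eq_sub_of_add_eq <|
    Finset.sum_symmDiff_add_two_nsmul_sum_inter I J fun k => single k k (1 : ℝ)
  simp only [Mflip, hA, hD, mul_sub, sub_mul, one_mul, mul_one, smul_mul_assoc, mul_smul_comm,
    sum_single_mul_sum_single_eq_zero _ hI, sum_single_mul_sum_single_diag (fun _ => j),
    sum_single_mul_sum_single_diag fun k => k, smul_zero]
  module

theorem Mflip_empty {n1 : ℕ} (j : Fin n1) : Mflip j ∅ = 1 := by
  simp [Mflip]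

theorem Mflip_mul_general (n1 : ℕ) (j : Fin n1)
    (I J : Finset (Fin n1)) (hI : j ∉ I) (hJ : j ∉ J) :
    Mflip j I * Mflip j J = Mflip j (symmDiff I J)
    ∧ Mflip j I * Mflip j I = 1
    ∧ Mflip j (∅ : Finset (Fin n1)) = 1
    ∧ Mflip j I * Mflip j J = Mflip j J * Mflip j I := by
  refine ⟨Mflip_mul_Mflip j hI J, ?_, Mflip_empty j, ?_⟩
  · rw [Mflip_mul_Mflip j hI, symmDiff_self, Finset.bot_eq_empty, Mflip_empty]
  · rw [Mflip_mul_Mflip j hI, Mflip_mul_Mflip j hJ, symmDiff_comm]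

/-- `M_I · M_J = M_{I △ J}`; in particular each `M_I` is an involution, the
identity is `M_∅`, the family is closed under multiplication and commutative, so
`G_j = { M_I : I ⊆ [n1]∖{j} }` is a finite abelian group under matrix multiplication. -/
theorem Mflip_mul (n1 : ℕ) (hn1 : 1 ≤ n1) (j : Fin n1)
    (I J : Finset (Fin n1)) (hI : j ∉ I) (hJ : j ∉ J) :
    Mflip j I * Mflip j J = Mflip j (symmDiff I J)
    ∧ Mflip j I * Mflip j I = 1
    ∧ Mflip j (∅ : Finset (Fin n1)) = 1
    ∧ Mflip j I * Mflip j J = Mflip j J * Mflip j I :=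
  Mflip_mul_general n1 j I J hI hJ
end
end

section
/- Consider feedforward ReLU networks with architecture (n0, n1, …, nL, n_{L+1}) and parameter space Θ ≅ ⊕_{ℓ=1}^{L+1} (ℝ^{n_ℓ×n_{ℓ−1}} × ℝ^{n_ℓ}) equipped with the Euclidean (Frobenius) inner product. Fix a layer ℓ with 2 ≤ ℓ ≤ L and a subset J ⊆ [n_ℓ], and let O ⊆ Θ be the set of parameters for which the neurons of layer ℓ indexed by J are linear, i.e., W^{(ℓ)}_{jk} ≥ 0 for all j ∈ J and all k ∈ [n_{ℓ−1}], and b^{(ℓ)}_j ≥ 0 for all j ∈ J. Let L : Θ → ℝ be a differentiable loss that is constant on fibers of the realization map, i.e., L(η) = L(θ) whenever f_η = f_θ as functions on ℝ^{n0}. If θ : [0,T] → Θ is a differentiable solution of the gradient flow θ'(t) = −∇L(θ(t)) with θ(t) ∈ O for all t ∈ [0,T], then the matrix-valued quantity (W^{(ℓ+1)}_{:,J})ᵀ W^{(ℓ+1)}_{:,J} − W^{(ℓ)}_J (W^{(ℓ)}_J)ᵀ − b^{(ℓ)}_J (b^{(ℓ)}_J)ᵀ, evaluated along θ(t), is constant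 on [0,T]. Here W^{(ℓ)}_J denotes the submatrix of the rows of W^{(ℓ)} indexed by J, b^{(ℓ)}_J the corresponding subvector, and W^{(ℓ+1)}_{:,J} the submatrix of the columns of W^{(ℓ+1)} indexed by J. -/
open Matrix

noncomputable section

/-- Index type for the parameter space of a feedforward network with `L` hidden layers and
widths `n 0, n 1, …, n (L+1)` (Lean layer index `ℓ : Fin (L+1)` is paper layer `ℓ+1`):
one summand for weight entries, one for bias entries. -/
abbrev NetParamIx (L : ℕ) (n : ℕ → ℕ) : Type :=
  (Σ ℓ : Fin (L + 1), Fin (n (ℓ + 1)) × Fin (n ℓ)) ⊕ (Σ ℓ : Fin (L + 1), Fin (n (ℓ + 1)))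

/-- The parameter space `Θ ≅ ⊕_{ℓ=1}^{L+1} (ℝ^{n_ℓ×n_{ℓ−1}} × ℝ^{n_ℓ})` with the Euclidean
(Frobenius) inner product. -/
abbrev NetParams (L : ℕ) (n : ℕ → ℕ) : Type := EuclideanSpace ℝ (NetParamIx L n)

/-- Weight matrix of (Lean-indexed) layer `ℓ`, i.e. `W^{(ℓ+1)}` in paper indexing. -/
def wt {L : ℕ} {n : ℕ → ℕ} (θ : NetParams L n) (ℓ : Fin (L + 1)) :
    Matrix (Fin (n (ℓ + 1))) (Fin (n ℓ)) ℝ :=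
  fun i k => θ (Sum.inl ⟨ℓ, (i, k)⟩)

/-- Bias vector of (Lean-indexed) layer `ℓ`, i.e. `b^{(ℓ+1)}` in paper indexing. -/
def bi {L : ℕ} {n : ℕ → ℕ} (θ : NetParams L n) (ℓ : Fin (L + 1)) : Fin (n (ℓ + 1)) → ℝ :=
  fun i => θ (Sum.inr ⟨ℓ, i⟩)

/-- Activation after `ℓ` ReLU layers, `ℓ ≤ L`. -/
def act {L : ℕ} {n : ℕ → ℕ} (θ : NetParams L n) (x : Fin (n 0) → ℝ) :
    (ℓ : ℕ) → Fin (n ℓ) → ℝ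
  | 0 => x
  | ℓ + 1 =>
      if h : ℓ < L + 1 then relu (wt θ ⟨ℓ, h⟩ *ᵥ act θ x ℓ + bi θ ⟨ℓ, h⟩) else 0

/-- The realization map: `f_θ = T^{(L+1)} ∘ φ^{(L)} ∘ ⋯ ∘ φ^{(1)}`, where each `φ` is a ReLU
layer and the final layer is affine. -/
def realizeNet {L : ℕ} {n : ℕ → ℕ} (θ : NetParams L n) (x : Fin (n 0) → ℝ) :
    Fin (n (L + 1)) → ℝ :=
  wt θ ⟨L, Nat.lt_succ_self L⟩ *ᵥ act θ x L + bi θ ⟨L, Nat.lt_succ_self L⟩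

/-!
For neurons `j, j' ∈ J`, multiply the incoming weights and biases of the layer by the
elementary matrix `A = 1 + ε E_{j j'}` and the outgoing weights by `A⁻¹`. For `ε ≥ 0` and
`θ ∈ O`, the neurons `j, j'` receive nonnegative inputs and have nonnegative preactivations, so
the ReLU commutes with `A` and the realization is unchanged. Differentiating the loss along
`ε ↦ A_ε · θ` at `ε = 0⁺` gives `⟪∇L θ, G_{j j'} θ⟫ = 0` for the generator `G_{j j'}` of this
action. The conserved quantity is `-⟪θ, G_{j j'} θ⟫` and `G_{j j'}† = G_{j' j}`, so its derivative
along the gradient flow is `⟪∇L θ, G_{j j'} θ⟫ + ⟪∇L θ, G_{j' j} θ⟫ = 0`.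
-/

open Set InnerProductSpace

section Conservation

variable {E : Type*} [NormedAddCommGroup E] [InnerProductSpace ℝ E]

theorem inner_gradient_eq_zero_of_hasDerivWithinAt_Ici [CompleteSpace E] {f : E → ℝ} {x v : E}
    {γ : ℝ → E} (hf : DifferentiableAt ℝ f x) (hγ0 : γ 0 = x)
    (hγ : HasDerivWithinAt γ v (Ici 0) 0) (hconst : ∀ ε ∈ Ici (0 : ℝ), f (γ ε) = f x) :
    ⟪gradient f x, v⟫_ℝ = 0 := by
  subst hγ0
  have hderiv : HasDerivWithinAt (f ∘ γ) (fderiv ℝ f (γ 0) v) (Ici 0) 0 :=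
    hf.hasFDerivAt.comp_hasDerivWithinAt 0 hγ
  have hzero : HasDerivWithinAt (f ∘ γ) 0 (Ici 0) 0 :=
    (hasDerivWithinAt_const 0 _ (f (γ 0))).congr (fun ε hε => hconst ε hε) rfl
  rw [gradient, toDual_symm_apply]
  exact (uniqueDiffOn_Ici 0 0 self_mem_Ici).eq_deriv _ hderiv hzero

theorem inner_map_self_eq_of_forall_inner_eq_zero [CompleteSpace E] (A : E →L[ℝ] E)
    {θ v : ℝ → E} {a b : ℝ} (hθ : ∀ t ∈ Icc a b, HasDerivAt θ (v t) t)
    (hA : ∀ t ∈ Icc a b, ⟪v t, A (θ t)⟫_ℝ = 0)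
    (hA' : ∀ t ∈ Icc a b, ⟪v t, ContinuousLinearMap.adjoint A (θ t)⟫_ℝ = 0) :
    ∀ s ∈ Icc a b, ∀ t ∈ Icc a b, ⟪θ s, A (θ s)⟫_ℝ = ⟪θ t, A (θ t)⟫_ℝ := by
  have hderiv : ∀ t ∈ Icc a b, HasDerivAt (fun t => ⟪θ t, A (θ t)⟫_ℝ) 0 t := by
    intro t ht
    refine ((hθ t ht).inner ℝ (A.hasFDerivAt.comp_hasDerivAt t (hθ t ht))).congr_deriv ?_
    rw [Function.comp_apply, ← ContinuousLinearMap.adjoint_inner_left, real_inner_comm, hA' t ht,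
      hA t ht, add_zero]
  have hconst := constant_of_has_deriv_right_zero
    (fun t ht => (hderiv t ht).continuousAt.continuousWithinAt)
    (fun t ht => (hderiv t (Ico_subset_Icc_self ht)).hasDerivWithinAt)
  intro s hs t ht
  rw [hconst s hs, hconst t ht]

end Conservation

section CoordTransfer

variable {𝕜 ι : Type*} [RCLike 𝕜] [Fintype ι] [DecidableEq ι]

def coordTransfer (a b : ι) : EuclideanSpace 𝕜 ι →L[𝕜] EuclideanSpace 𝕜 ι :=
  (EuclideanSpace.proj a).smulRight (EuclideanSpace.single b 1)

theorem coordTransfer_apply (a b : ι) (x : EuclideanSpace 𝕜 ι) :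
    coordTransfer a b x = EuclideanSpace.single b (x a) := by
  ext i
  by_cases hi : i = b <;> simp [coordTransfer, hi]

theorem adjoint_coordTransfer (a b : ι) :
    ContinuousLinearMap.adjoint (coordTransfer (𝕜 := 𝕜) a b) = coordTransfer b a := by
  refine ((ContinuousLinearMap.eq_adjoint_iff _ _).mpr fun x y => ?_).symm
  simp only [coordTransfer_apply, EuclideanSpace.inner_single_left,
    EuclideanSpace.inner_single_right, mul_comm]

end CoordTransfer

theorem Matrix.transvection_mul_transvection_eq_one {m R : Type*} [Fintype m] [DecidableEq m]
    [Field R] {i j : m} {c : R} (hc : 1 + c * (if i = j then 1 else 0) ≠ 0) :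
    transvection i j (-(c / (1 + c * if i = j then 1 else 0))) * transvection i j c = 1 := by
  by_cases hij : i = j
  · subst hij
    set d := -(c / (1 + c * if i = i then 1 else 0))
    have hd : d + (c + d * c) = 0 := by
      simp only [d, if_true, mul_one] at hc ⊢
      field_simp
      ring
    rw [transvection, transvection, Matrix.mul_add, Matrix.add_mul, Matrix.add_mul,
      Matrix.one_mul, Matrix.mul_one, Matrix.one_mul, single_mul_single_same, add_assoc,
      ← single_add, ← single_add, hd, single_zero, add_zero]
  · simp [transvection_mul_transvection_same _ _ hij, hij]

section Network

variable {L : ℕ} {n : ℕ → ℕ}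

/-- The region `O` of the paper: fed the nonnegative output of a ReLU layer, such a neuron has a
nonnegative preactivation, so it acts linearly. -/
def IsLinearNeuron (θ : NetParams L n) (ℓ : Fin (L + 1)) (j : Fin (n (ℓ + 1))) : Prop :=
  (∀ k, 0 ≤ wt θ ℓ j k) ∧ 0 ≤ bi θ ℓ j

def preact (θ : NetParams L n) (x : Fin (n 0) → ℝ) (ℓ : Fin (L + 1)) : Fin (n (ℓ + 1)) → ℝ :=
  wt θ ℓ *ᵥ act θ x ℓ + bi θ ℓ

theorem act_succ (θ : NetParams L n) (x : Fin (n 0) → ℝ) (ℓ : Fin (L + 1)) :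
    act θ x (ℓ + 1) = relu (preact θ x ℓ) := by
  rw [act, dif_pos ℓ.isLt, preact]

theorem act_nonneg (θ : NetParams L n) (x : Fin (n 0) → ℝ) {m : ℕ} (hm : m ≠ 0)
    (i : Fin (n m)) : 0 ≤ act θ x m i := by
  obtain ⟨m, rfl⟩ := Nat.exists_eq_succ_of_ne_zero hm
  rw [act]
  split
  · exact le_max_right _ _
  · exact le_rfl

theorem preact_nonneg_of_isLinearNeuron {θ : NetParams L n} {x : Fin (n 0) → ℝ}
    {ℓ : Fin (L + 1)} {j : Fin (n (ℓ + 1))} (hj : IsLinearNeuron θ ℓ j)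
    (hx : 0 ≤ act θ x ℓ) : 0 ≤ preact θ x ℓ j :=
  add_nonneg (dotProduct_nonneg_of_nonneg (fun k => hj.1 k) hx) hj.2

theorem relu_transvection_mulVec {m : ℕ} {i j : Fin m} {c : ℝ} {v : Fin m → ℝ} (hc : 0 ≤ c)
    (hi : 0 ≤ v i) (hj : 0 ≤ v j) :
    relu (transvection i j c *ᵥ v) = transvection i j c *ᵥ relu v := by
  ext a
  simp only [relu, Matrix.transvection, Matrix.add_mulVec, Matrix.one_mulVec,
    Matrix.single_mulVec, Pi.add_apply]
  by_cases ha : a = i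
  · subst ha
    simp only [Function.update_self, max_eq_left hi, max_eq_left hj]
    exact max_eq_left (by positivity)
  · simp [ha]

section Mixing

variable (p : ℕ) (hp : p < L) (j j' : Fin (n (p + 1)))

def inMix : NetParams L n →L[ℝ] NetParams L n :=
  ∑ k, coordTransfer (Sum.inl ⟨⟨p, by omega⟩, (j', k)⟩) (Sum.inl ⟨⟨p, by omega⟩, (j, k)⟩) +
    coordTransfer (Sum.inr ⟨⟨p, by omega⟩, j'⟩) (Sum.inr ⟨⟨p, by omega⟩, j⟩)

def outMix : NetParams L n →L[ℝ] NetParams L n :=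
  ∑ i : Fin (n (p + 2)),
    coordTransfer (Sum.inl ⟨⟨p + 1, by omega⟩, (i, j)⟩) (Sum.inl ⟨⟨p + 1, by omega⟩, (i, j')⟩)

def mixGenerator : NetParams L n →L[ℝ] NetParams L n := inMix p hp j j' - outMix p hp j j'

/-- Multiplies the incoming weights and bias of layer `p` by `transvection j j' ε` and the outgoing
weights by its inverse (`Matrix.transvection_mul_transvection_eq_one`). -/
def mixNeurons (ε : ℝ) (θ : NetParams L n) : NetParams L n :=
  θ + ε • inMix p hp j j' θ - (ε / (1 + ε * if j = j' then 1 else 0)) • outMix p hp j j' θ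

theorem adjoint_mixGenerator :
    ContinuousLinearMap.adjoint (mixGenerator p hp j j') = mixGenerator p hp j' j := by
  simp only [mixGenerator, inMix, outMix, map_sub, map_add, map_sum, adjoint_coordTransfer]

theorem inner_mixGenerator_self (θ : NetParams L n) :
    ⟪θ, mixGenerator p hp j j' θ⟫_ℝ =
      -((∑ i, wt θ ⟨p + 1, by omega⟩ i j * wt θ ⟨p + 1, by omega⟩ i j')
        - (∑ k, wt θ ⟨p, by omega⟩ j k * wt θ ⟨p, by omega⟩ j' k)
        - bi θ ⟨p, by omega⟩ j * bi θ ⟨p, by omega⟩ j') := by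
  simp only [mixGenerator, inMix, outMix, _root_.sub_apply,
    _root_.add_apply, _root_.sum_apply, coordTransfer_apply,
    inner_sub_right, inner_add_right, inner_sum, EuclideanSpace.inner_single_right, conj_trivial]
  rw [Finset.sum_congr rfl fun k _ => mul_comm (θ (Sum.inl ⟨⟨p, by omega⟩, (j', k)⟩)) _]
  simp only [wt, bi]
  ring

variable {p} {hp} {j j'} (θ : NetParams L n) (ε : ℝ)

theorem mixNeurons_zero : mixNeurons p hp j j' 0 θ = θ := by
  simp [mixNeurons]

theorem hasDerivAt_mixNeurons :
    HasDerivAt (fun ε => mixNeurons p hp j j' ε θ) (mixGenerator p hp j j' θ) 0 := by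
  have hc : HasDerivAt (fun ε : ℝ => ε / (1 + ε * if j = j' then 1 else 0)) 1 0 := by
    simpa using (hasDerivAt_id' (0 : ℝ)).fun_div
      (((hasDerivAt_id' 0).mul_const (if j = j' then (1 : ℝ) else 0)).const_add 1) (by simp)
  exact ((((hasDerivAt_id 0).smul_const (inMix p hp j j' θ)).const_add θ).sub
    (hc.smul_const (outMix p hp j j' θ))).congr_deriv (by simp [mixGenerator])

theorem wt_mixNeurons_self :
    wt (mixNeurons p hp j j' ε θ) ⟨p, by omega⟩ =
      transvection j j' ε * wt θ ⟨p, by omega⟩ := by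
  ext a k
  by_cases ha : a = j <;>
    simp [wt, mixNeurons, inMix, outMix, coordTransfer_apply, Pi.single_apply, ha]

theorem bi_mixNeurons_self :
    bi (mixNeurons p hp j j' ε θ) ⟨p, by omega⟩ =
      transvection j j' ε *ᵥ bi θ ⟨p, by omega⟩ := by
  ext a
  by_cases ha : a = j <;>
    simp [bi, mixNeurons, inMix, outMix, coordTransfer_apply, ha,
      Matrix.transvection, Matrix.add_mulVec, Matrix.single_mulVec]

theorem wt_mixNeurons_succ :
    wt (mixNeurons p hp j j' ε θ) ⟨p + 1, by omega⟩ =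
      wt θ ⟨p + 1, by omega⟩ * transvection j j' (-(ε / (1 + ε * if j = j' then 1 else 0))) := by
  ext i b
  by_cases hb : b = j' <;>
    simp [wt, mixNeurons, inMix, outMix, coordTransfer_apply, Pi.single_apply, hb, sub_eq_add_neg]

theorem wt_mixNeurons_of_ne {q : Fin (L + 1)} (hq : (q : ℕ) ≠ p) (hq' : (q : ℕ) ≠ p + 1) :
    wt (mixNeurons p hp j j' ε θ) q = wt θ q := by
  ext a k
  simp [wt, mixNeurons, inMix, outMix, coordTransfer_apply, Fin.ext_iff, hq, hq']

theorem bi_mixNeurons_of_ne {q : Fin (L + 1)} (hq : (q : ℕ) ≠ p) :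
    bi (mixNeurons p hp j j' ε θ) q = bi θ q := by
  ext a
  simp [bi, mixNeurons, inMix, outMix, coordTransfer_apply, Fin.ext_iff, hq]

variable (x : Fin (n 0) → ℝ)

theorem act_mixNeurons_of_le {m : ℕ} (hm : m ≤ p) :
    act (mixNeurons p hp j j' ε θ) x m = act θ x m := by
  induction m with
  | zero => rfl
  | succ m ih =>
    have hmL : m < L + 1 := by omega
    rw [act, act, dif_pos hmL, dif_pos hmL, wt_mixNeurons_of_ne θ ε (show m ≠ p by omega)
      (show m ≠ p + 1 by omega), bi_mixNeurons_of_ne θ ε (show m ≠ p by omega), ih (by omega)]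

variable {θ ε} (hp1 : p ≠ 0) (hj : IsLinearNeuron θ ⟨p, by omega⟩ j)
  (hj' : IsLinearNeuron θ ⟨p, by omega⟩ j') (hε : 0 ≤ ε)
include hp1 hj hj' hε

theorem act_mixNeurons_succ :
    act (mixNeurons p hp j j' ε θ) x (p + 1) = transvection j j' ε *ᵥ act θ x (p + 1) := by
  have hx : 0 ≤ act θ x p := fun k => act_nonneg θ x hp1 k
  have hpre : preact (mixNeurons p hp j j' ε θ) x ⟨p, by omega⟩ =
      transvection j j' ε *ᵥ preact θ x ⟨p, by omega⟩ := by
    rw [preact, preact, wt_mixNeurons_self, bi_mixNeurons_self, act_mixNeurons_of_le θ ε x le_rfl,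
      ← Matrix.mulVec_mulVec, ← Matrix.mulVec_add]
  rw [act_succ _ _ ⟨p, by omega⟩, act_succ _ _ ⟨p, by omega⟩, hpre,
    relu_transvection_mulVec hε (preact_nonneg_of_isLinearNeuron hj hx)
      (preact_nonneg_of_isLinearNeuron hj' hx)]

theorem preact_mixNeurons_succ :
    preact (mixNeurons p hp j j' ε θ) x ⟨p + 1, by omega⟩ = preact θ x ⟨p + 1, by omega⟩ := by
  have hc : 1 + ε * (if j = j' then 1 else 0) ≠ 0 := by positivity
  rw [preact, preact, wt_mixNeurons_succ, bi_mixNeurons_of_ne θ ε (show p + 1 ≠ p by omega),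
    act_mixNeurons_succ x hp1 hj hj' hε, Matrix.mulVec_mulVec, Matrix.mul_assoc,
    transvection_mul_transvection_eq_one hc, Matrix.mul_one]

theorem act_mixNeurons_of_ge {m : ℕ} (hm : p + 2 ≤ m) :
    act (mixNeurons p hp j j' ε θ) x m = act θ x m := by
  induction m with
  | zero => omega
  | succ m ih =>
    by_cases hmL : m < L + 1
    · rw [act_succ _ _ ⟨m, hmL⟩, act_succ _ _ ⟨m, hmL⟩]
      congr 1
      by_cases hmp : m = p + 1
      · subst hmp
        exact preact_mixNeurons_succ x hp1 hj hj' hε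
      · rw [preact, preact, wt_mixNeurons_of_ne θ ε (show m ≠ p by omega) hmp,
          bi_mixNeurons_of_ne θ ε (show m ≠ p by omega), ih (by omega)]
    · rw [act, act, dif_neg hmL, dif_neg hmL]

theorem realizeNet_mixNeurons : realizeNet (mixNeurons p hp j j' ε θ) x = realizeNet θ x := by
  change preact _ x ⟨L, by omega⟩ = preact θ x ⟨L, by omega⟩
  by_cases hpL : p + 1 = L
  · subst hpL
    exact preact_mixNeurons_succ x hp1 hj hj' hε
  · rw [preact, preact, wt_mixNeurons_of_ne θ ε (show L ≠ p by omega) (Ne.symm hpL),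
      bi_mixNeurons_of_ne θ ε (show L ≠ p by omega),
      act_mixNeurons_of_ge x hp1 hj hj' hε (show p + 2 ≤ L by omega)]

end Mixing

theorem inner_gradient_mixGenerator_eq_zero {p : ℕ} {hp : p < L} {j j' : Fin (n (p + 1))}
    {θ : NetParams L n} {Lo : NetParams L n → ℝ} (hdiff : DifferentiableAt ℝ Lo θ)
    (hfib : ∀ θ η : NetParams L n, (∀ x, realizeNet θ x = realizeNet η x) → Lo θ = Lo η)
    (hp1 : p ≠ 0) (hj : IsLinearNeuron θ ⟨p, by omega⟩ j)
    (hj' : IsLinearNeuron θ ⟨p, by omega⟩ j') :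
    ⟪gradient Lo θ, mixGenerator p hp j j' θ⟫_ℝ = 0 :=
  inner_gradient_eq_zero_of_hasDerivWithinAt_Ici hdiff (mixNeurons_zero θ)
    (hasDerivAt_mixNeurons θ).hasDerivWithinAt
    fun _ hε => hfib _ _ fun x => realizeNet_mixNeurons x hp1 hj hj' hε

end Network

/-- locally conserved quantity under gradient flow. Fix a layer (paper index
`ℓ = p+1` with `2 ≤ ℓ ≤ L`, i.e. `1 ≤ p` and `p + 1 ≤ L`) and a subset `J` of its neurons.
Along any gradient-flow trajectory of a differentiable loss that is constant on fibers of the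
realization map and that stays, on `[0,T]`, in the orthant `O` where the neurons in `J` are
linear (nonnegative incoming weights and biases), the quantity
`(W^{(ℓ+1)}_{:,J})ᵀ W^{(ℓ+1)}_{:,J} − W^{(ℓ)}_J (W^{(ℓ)}_J)ᵀ − b^{(ℓ)}_J (b^{(ℓ)}_J)ᵀ`
is constant on `[0,T]`. -/
theorem locally_conserved_quantity (L : ℕ) (n : ℕ → ℕ)
    (p : ℕ) (hp1 : 1 ≤ p) (hp2 : p + 1 ≤ L)
    (J : Set (Fin (n (p + 1))))
    (T : ℝ)
    (Lo : NetParams L n → ℝ)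
    (hdiff : Differentiable ℝ Lo)
    (hfib : ∀ θ η : NetParams L n,
      (∀ x, realizeNet θ x = realizeNet η x) → Lo θ = Lo η)
    (θ : ℝ → NetParams L n)
    (hflow : ∀ t ∈ Set.Icc (0 : ℝ) T, HasDerivAt θ (-(gradient Lo (θ t))) t)
    (hlin : ∀ t ∈ Set.Icc (0 : ℝ) T, ∀ j ∈ J,
      (∀ k : Fin (n ((⟨p, by omega⟩ : Fin (L + 1)) : ℕ)), 0 ≤ wt (θ t) ⟨p, by omega⟩ j k) ∧ 0 ≤ bi (θ t) ⟨p, by omega⟩ j) :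
    ∀ s ∈ Set.Icc (0 : ℝ) T, ∀ t ∈ Set.Icc (0 : ℝ) T, ∀ j ∈ J, ∀ j' ∈ J,
      ((∑ i, wt (θ s) ⟨p + 1, by omega⟩ i j * wt (θ s) ⟨p + 1, by omega⟩ i j')
        - (∑ k, wt (θ s) ⟨p, by omega⟩ j k * wt (θ s) ⟨p, by omega⟩ j' k)
        - bi (θ s) ⟨p, by omega⟩ j * bi (θ s) ⟨p, by omega⟩ j')
      = ((∑ i, wt (θ t) ⟨p + 1, by omega⟩ i j * wt (θ t) ⟨p + 1, by omega⟩ i j')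
        - (∑ k, wt (θ t) ⟨p, by omega⟩ j k * wt (θ t) ⟨p, by omega⟩ j' k)
        - bi (θ t) ⟨p, by omega⟩ j * bi (θ t) ⟨p, by omega⟩ j') := by
  intro s hs t ht j hj j' hj'
  have hortho : ∀ {a b}, a ∈ J → b ∈ J → ∀ u ∈ Icc 0 T,
      ⟪-gradient Lo (θ u), mixGenerator p hp2 a b (θ u)⟫_ℝ = 0 := fun ha hb u hu => by
    rw [inner_neg_left, inner_gradient_mixGenerator_eq_zero (hdiff _) hfib (by omega)
      (hlin u hu _ ha) (hlin u hu _ hb), neg_zero]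
  have hconst := inner_map_self_eq_of_forall_inner_eq_zero (mixGenerator p hp2 j j') hflow
    (hortho hj hj') (by rw [adjoint_mixGenerator]; exact hortho hj' hj) s hs t ht
  rwa [inner_mixGenerator_self, inner_mixGenerator_self, neg_inj] at hconst
end
end

section
/- Let Θ = ℝ^{m×J} × ℝ^{J×d} × ℝ^m × ℝ^J with the Euclidean (Frobenius) inner product, parametrizing affine functions f(x) = U(Vx + v) + u via θ = (U, V, u, v). Let Φ : ℝ^{m×d} × ℝ^m → ℝ be differentiable and define the loss L(U, V, u, v) = Φ(UV, Uv + u), so that L depends on θ only through the realized affine map. If θ = (U, V, u, v) : ℝ → Θ is a differentiable solution of the gradient flow θ'(t) = −∇L(θ(t)), then the matrix-valued quantity U(t)ᵀU(t) − V(t)V(t)ᵀ − v(t)v(t)ᵀ ∈ ℝ^{J×J} is constant in t. -/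
noncomputable section

/-- Index type for the parameter space `Θ = ℝ^{m×J} × ℝ^{J×d} × ℝ^m × ℝ^J`. -/
abbrev LinParamIx (m J d : ℕ) : Type :=
  (Fin m × Fin J) ⊕ ((Fin J × Fin d) ⊕ (Fin m ⊕ Fin J))

/-- The parameter space with the Euclidean (Frobenius) inner product. -/
abbrev LinParams (m J d : ℕ) : Type := EuclideanSpace ℝ (LinParamIx m J d)

def Umat {m J d : ℕ} (θ : LinParams m J d) : Fin m → Fin J → ℝ :=
  fun i j => θ (Sum.inl (i, j))

def Vmat {m J d : ℕ} (θ : LinParams m J d) : Fin J → Fin d → ℝ :=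
  fun j k => θ (Sum.inr (Sum.inl (j, k)))

def uvec {m J d : ℕ} (θ : LinParams m J d) : Fin m → ℝ :=
  fun i => θ (Sum.inr (Sum.inr (Sum.inl i)))

def vvec {m J d : ℕ} (θ : LinParams m J d) : Fin J → ℝ :=
  fun j => θ (Sum.inr (Sum.inr (Sum.inr j)))

/-!
The loss depends on `θ` only through `(UV, Uv + u)`, which is invariant under
`U ↦ U g⁻¹, V ↦ g V, v ↦ g v` for `g ∈ GL_J`. Hence the gradient is orthogonal to the orbit
directions `(-UX, XV, 0, Xv)`, and along the gradient flow this orthogonality says that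
`Uᵀ U̇ - V̇ Vᵀ - v̇ vᵀ = 0`; the derivative of `UᵀU - VVᵀ - vvᵀ` is this matrix plus its
transpose.
-/

theorem inner_gradient_comp_eq_zero_of_hasLineDerivAt {E F : Type*}
    [NormedAddCommGroup E] [InnerProductSpace ℝ E] [CompleteSpace E]
    [NormedAddCommGroup F] [NormedSpace ℝ F] {Φ : F → ℝ} {P : E → F} {x v : E}
    (hΦ : DifferentiableAt ℝ Φ (P x)) (hP : DifferentiableAt ℝ P x)
    (hv : HasLineDerivAt ℝ P 0 x v) : inner ℝ (gradient (Φ ∘ P) x) v = 0 := by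
  have hPv : fderiv ℝ P x v = 0 := (hP.hasFDerivAt.hasLineDerivAt v).unique hv
  rw [inner_gradient_left, fderiv_comp x hΦ hP, ContinuousLinearMap.comp_apply, hPv, map_zero]

namespace LinParams

variable {m J d : ℕ}

def ofBlocks (U : Fin m → Fin J → ℝ) (V : Fin J → Fin d → ℝ) (u : Fin m → ℝ) (v : Fin J → ℝ) :
    LinParams m J d :=
  WithLp.toLp 2 (Sum.elim (fun p => U p.1 p.2) (Sum.elim (fun p => V p.1 p.2) (Sum.elim u v)))

section ofBlocks

variable (U : Fin m → Fin J → ℝ) (V : Fin J → Fin d → ℝ) (u : Fin m → ℝ) (v : Fin J → ℝ)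

@[simp] theorem Umat_ofBlocks : Umat (ofBlocks U V u v) = U := rfl
@[simp] theorem Vmat_ofBlocks : Vmat (ofBlocks U V u v) = V := rfl
@[simp] theorem uvec_ofBlocks : uvec (ofBlocks U V u v) = u := rfl
@[simp] theorem vvec_ofBlocks : vvec (ofBlocks U V u v) = v := rfl

end ofBlocks

theorem inner_eq_sum_blocks (θ η : LinParams m J d) :
    inner ℝ θ η = (∑ i, ∑ j, Umat θ i j * Umat η i j) + (∑ j, ∑ k, Vmat θ j k * Vmat η j k)
      + (∑ i, uvec θ i * uvec η i) + ∑ j, vvec θ j * vvec η j := by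
  simp [PiLp.inner_apply, Fintype.sum_sum_type, Fintype.sum_prod_type, Umat, Vmat, uvec, vvec,
    mul_comm, add_assoc]

def realize (θ : LinParams m J d) : (Fin m → Fin d → ℝ) × (Fin m → ℝ) :=
  (fun i k => ∑ j, Umat θ i j * Vmat θ j k, fun i => (∑ j, Umat θ i j * vvec θ j) + uvec θ i)

theorem differentiable_realize : Differentiable ℝ (realize (m := m) (J := J) (d := d)) := by
  unfold realize Umat Vmat uvec vvec
  fun_prop

section Curve

variable {θ : ℝ → LinParams m J d} {θ' : LinParams m J d} {t : ℝ}

theorem hasDerivAt_Umat (hθ : HasDerivAt θ θ' t) (i : Fin m) (j : Fin J) :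
    HasDerivAt (fun t => Umat (θ t) i j) (Umat θ' i j) t :=
  (PiLp.hasFDerivAt_apply 2 (θ t) _).comp_hasDerivAt t hθ

theorem hasDerivAt_Vmat (hθ : HasDerivAt θ θ' t) (j : Fin J) (k : Fin d) :
    HasDerivAt (fun t => Vmat (θ t) j k) (Vmat θ' j k) t :=
  (PiLp.hasFDerivAt_apply 2 (θ t) _).comp_hasDerivAt t hθ

theorem hasDerivAt_uvec (hθ : HasDerivAt θ θ' t) (i : Fin m) :
    HasDerivAt (fun t => uvec (θ t) i) (uvec θ' i) t :=
  (PiLp.hasFDerivAt_apply 2 (θ t) _).comp_hasDerivAt t hθ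

theorem hasDerivAt_vvec (hθ : HasDerivAt θ θ' t) (j : Fin J) :
    HasDerivAt (fun t => vvec (θ t) j) (vvec θ' j) t :=
  (PiLp.hasFDerivAt_apply 2 (θ t) _).comp_hasDerivAt t hθ

end Curve

def realizeDeriv (θ h : LinParams m J d) : (Fin m → Fin d → ℝ) × (Fin m → ℝ) :=
  (fun i k => ∑ j, (Umat h i j * Vmat θ j k + Umat θ i j * Vmat h j k),
   fun i => (∑ j, (Umat h i j * vvec θ j + Umat θ i j * vvec h j)) + uvec h i)

theorem hasDerivAt_realize {θ : ℝ → LinParams m J d} {θ' : LinParams m J d} {t : ℝ}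
    (hθ : HasDerivAt θ θ' t) :
    HasDerivAt (fun t => realize (θ t)) (realizeDeriv (θ t) θ') t := by
  refine .prodMk (hasDerivAt_pi.2 fun i => hasDerivAt_pi.2 fun k => ?_)
    (hasDerivAt_pi.2 fun i => ?_)
  · exact .fun_sum fun j _ => (hasDerivAt_Umat hθ i j).fun_mul (hasDerivAt_Vmat hθ j k)
  · exact (HasDerivAt.fun_sum fun j _ => (hasDerivAt_Umat hθ i j).fun_mul (hasDerivAt_vvec hθ j))
      |>.fun_add (hasDerivAt_uvec hθ i)

theorem hasLineDerivAt_realize (θ h : LinParams m J d) :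
    HasLineDerivAt ℝ realize (realizeDeriv θ h) θ h := by
  have hline : HasDerivAt (fun s : ℝ => θ + s • h) h 0 := by
    simpa using ((hasDerivAt_id (0 : ℝ)).smul_const h).const_add θ
  simpa [HasLineDerivAt] using hasDerivAt_realize hline

/-- The orbit direction `(-UX, XV, 0, Xv)` for the matrix unit `X = E_{jj'}`. -/
def balanceDir (θ : LinParams m J d) (j j' : Fin J) : LinParams m J d :=
  ofBlocks (fun i b => if b = j' then -Umat θ i j else 0)
    (fun a k => if a = j then Vmat θ j' k else 0) 0 (fun a => if a = j then vvec θ j' else 0)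

theorem realizeDeriv_balanceDir (θ : LinParams m J d) (j j' : Fin J) :
    realizeDeriv θ (balanceDir θ j j') = 0 := by
  refine Prod.ext (funext fun i => funext fun k => ?_) (funext fun i => ?_) <;>
  simp [realizeDeriv, balanceDir, ite_mul, mul_ite, Finset.sum_add_distrib]

/-- The `(j, j')` entry of `Uᵀ U_η - V_η Vᵀ - v_η vᵀ`; at `η = θ` it is the conserved quantity. -/
def balanceForm (θ η : LinParams m J d) (j j' : Fin J) : ℝ :=
  (∑ i, Umat θ i j * Umat η i j') - (∑ k, Vmat η j k * Vmat θ j' k) - vvec η j * vvec θ j'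

theorem inner_balanceDir (θ η : LinParams m J d) (j j' : Fin J) :
    inner ℝ η (balanceDir θ j j') = -balanceForm θ η j j' := by
  simp [inner_eq_sum_blocks, balanceDir, balanceForm, mul_ite, mul_comm]
  ring

theorem hasDerivAt_balanceForm {θ : ℝ → LinParams m J d} {θ' : LinParams m J d} {t : ℝ}
    (hθ : HasDerivAt θ θ' t) (j j' : Fin J) :
    HasDerivAt (fun t => balanceForm (θ t) (θ t) j j')
      (balanceForm (θ t) θ' j j' + balanceForm (θ t) θ' j' j) t := by
  have hU := HasDerivAt.fun_sum (u := Finset.univ) fun i _ =>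
    (hasDerivAt_Umat hθ i j).fun_mul (hasDerivAt_Umat hθ i j')
  have hV := HasDerivAt.fun_sum (u := Finset.univ) fun k _ =>
    (hasDerivAt_Vmat hθ j k).fun_mul (hasDerivAt_Vmat hθ j' k)
  have hv := (hasDerivAt_vvec hθ j).fun_mul (hasDerivAt_vvec hθ j')
  refine ((hU.fun_sub hV).fun_sub hv).congr_deriv ?_
  simp only [balanceForm, Finset.sum_add_distrib, mul_comm]
  ring

theorem inner_gradient_balanceDir {Φ : (Fin m → Fin d → ℝ) × (Fin m → ℝ) → ℝ}
    (hΦ : Differentiable ℝ Φ) (θ : LinParams m J d) (j j' : Fin J) :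
    inner ℝ (gradient (Φ ∘ realize) θ) (balanceDir θ j j') = 0 :=
  inner_gradient_comp_eq_zero_of_hasLineDerivAt (hΦ _) (differentiable_realize θ)
    (realizeDeriv_balanceDir θ j j' ▸ hasLineDerivAt_realize θ _)

end LinParams

open LinParams in
/-- for a loss `L(U,V,u,v) = Φ(UV, Uv + u)` depending only on the realized
affine map, along any gradient-flow trajectory the quantity `UᵀU − VVᵀ − vvᵀ` is constant. -/
theorem conserved_quantity_linear_network {m J d : ℕ}
    (Φ : ((Fin m → Fin d → ℝ) × (Fin m → ℝ)) → ℝ) (hΦ : Differentiable ℝ Φ)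
    (Lo : LinParams m J d → ℝ)
    (hLo : ∀ θ : LinParams m J d,
      Lo θ = Φ (fun i k => ∑ j, Umat θ i j * Vmat θ j k,
                fun i => (∑ j, Umat θ i j * vvec θ j) + uvec θ i))
    (θ : ℝ → LinParams m J d)
    (hflow : ∀ t : ℝ, HasDerivAt θ (-(gradient Lo (θ t))) t) :
    ∀ s t : ℝ, ∀ j j' : Fin J,
      (∑ i, Umat (θ s) i j * Umat (θ s) i j')
        - (∑ k, Vmat (θ s) j k * Vmat (θ s) j' k)
        - vvec (θ s) j * vvec (θ s) j'
      = (∑ i, Umat (θ t) i j * Umat (θ t) i j')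
        - (∑ k, Vmat (θ t) j k * Vmat (θ t) j' k)
        - vvec (θ t) j * vvec (θ t) j' := by
  have hL : Lo = Φ ∘ realize := funext hLo
  have hbalance (t : ℝ) (j j' : Fin J) : balanceForm (θ t) (-gradient Lo (θ t)) j j' = 0 := by
    rw [← neg_eq_zero, ← inner_balanceDir, inner_neg_left, hL, inner_gradient_balanceDir hΦ,
      neg_zero]
  have hderiv (j j' : Fin J) (t : ℝ) : HasDerivAt (fun t => balanceForm (θ t) (θ t) j j') 0 t := by
    simpa [hbalance] using hasDerivAt_balanceForm (hflow t) j j'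
  intro s t j j'
  exact is_const_of_deriv_eq_zero (fun t => (hderiv j j' t).differentiableAt)
    (fun t => (hderiv j j' t).deriv) s t
end
end

section
/- Fix n1, n2 ≥ 1 and j ∈ [n1], and let Ω be a nonempty open subset of the space ℝ^{n2×n1} × ℝ^{n2} of pairs (W2, b2). There is no twice continuously differentiable function C : Ω → ℝ satisfying, for all (W2, b2) ∈ Ω and all i ∈ [n2], both ∂C/∂(W2)_{ij} = 0 and ∂C/∂(b2)_i = −(W2)_{ij}. (Consequently, the continuous translation symmetry of hiding parameters does not induce a conserved quantity of gradient flow.) -/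
/-!
The prescribed gradient is not closed: its `b2_i`-component depends on `(W2)_{ij}` while its
`(W2)_{ij}`-component does not depend on `b2_i`, so the mixed second partials of `C` in the
directions `e_{(i,j)}` and `e_i` would be `0` and `-1`, contradicting Schwarz's theorem.
-/

open Filter Topology

section MixedPartials

variable {E F : Type*} [NormedAddCommGroup E] [NormedSpace ℝ E]
  [NormedAddCommGroup F] [NormedSpace ℝ F]

theorem fderiv_fderiv_apply_eq {f : E → F} {p : E} (hf : DifferentiableAt ℝ (fderiv ℝ f) p)
    (u v : E) : fderiv ℝ (fun y ↦ fderiv ℝ f y v) p u = fderiv ℝ (fderiv ℝ f) p u v := by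
  rw [fderiv_clm_apply hf (differentiableAt_const v), fderiv_const_apply]
  simp

theorem ContDiffAt.fderiv_fderiv_apply_comm {f : E → F} {p : E} (hf : ContDiffAt ℝ 2 f p)
    (u v : E) :
    fderiv ℝ (fun y ↦ fderiv ℝ f y v) p u = fderiv ℝ (fun y ↦ fderiv ℝ f y u) p v := by
  have hf' : DifferentiableAt ℝ (fderiv ℝ f) p :=
    (hf.fderiv_right (m := 1) le_rfl).differentiableAt one_ne_zero
  rw [fderiv_fderiv_apply_eq hf', fderiv_fderiv_apply_eq hf',
    hf.isSymmSndFDerivAt (by simp [minSmoothness_of_isRCLikeNormedField])]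

end MixedPartials

theorem no_conserved_quantity_for_translation_symmetry_general {n1 n2 : ℕ}
    (hn2 : 1 ≤ n2) (j : Fin n1)
    (Ω : Set (((Fin n2 × Fin n1) → ℝ) × ((Fin n2) → ℝ)))
    (hopen : IsOpen Ω) (hne : Ω.Nonempty) :
    ¬ ∃ C : (((Fin n2 × Fin n1) → ℝ) × ((Fin n2) → ℝ)) → ℝ,
        ContDiffOn ℝ 2 C Ω ∧
        ∀ p ∈ Ω, ∀ i : Fin n2,
          fderiv ℝ C p ((Pi.single (i, j) 1 : (Fin n2 × Fin n1) → ℝ), 0) = 0 ∧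
          fderiv ℝ C p (0, (Pi.single i 1 : (Fin n2) → ℝ)) = -(p.1 (i, j)) := by
  rintro ⟨C, hC, hder⟩
  obtain ⟨p, hp⟩ := hne
  let i : Fin n2 := ⟨0, hn2⟩
  set eW : ((Fin n2 × Fin n1) → ℝ) × ((Fin n2) → ℝ) := (Pi.single (i, j) 1, 0)
  set eb : ((Fin n2 × Fin n1) → ℝ) × ((Fin n2) → ℝ) := (0, Pi.single i 1)
  have hΩ : Ω ∈ 𝓝 p := hopen.mem_nhds hp
  have hW : (fun y ↦ fderiv ℝ C y eW) =ᶠ[𝓝 p] fun _ ↦ 0 := by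
    filter_upwards [hΩ] with y hy using (hder y hy i).1
  have hb : (fun y ↦ fderiv ℝ C y eb) =ᶠ[𝓝 p] fun y ↦ -(y.1 (i, j)) := by
    filter_upwards [hΩ] with y hy using (hder y hy i).2
  have hschwarz := (hC.contDiffAt hΩ).fderiv_fderiv_apply_comm eW eb
  rw [hW.fderiv_eq, hb.fderiv_eq] at hschwarz
  simp [fderiv_apply, fderiv_fst, eW, eb] at hschwarz

/-- on any nonempty open set `Ω` of pairs `(W2, b2)`, there is no C² function
`C` whose partial derivative in each `(W2)_{ij}`-direction vanishes while its partial
derivative in each `(b2)_i`-direction equals `−(W2)_{ij}`. Hence the continuous translation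
symmetry of hiding parameters induces no conserved quantity of gradient flow. -/
theorem no_conserved_quantity_for_translation_symmetry {n1 n2 : ℕ}
    (hn1 : 1 ≤ n1) (hn2 : 1 ≤ n2) (j : Fin n1)
    (Ω : Set (((Fin n2 × Fin n1) → ℝ) × ((Fin n2) → ℝ)))
    (hopen : IsOpen Ω) (hne : Ω.Nonempty) :
    ¬ ∃ C : (((Fin n2 × Fin n1) → ℝ) × ((Fin n2) → ℝ)) → ℝ,
        ContDiffOn ℝ 2 C Ω ∧
        ∀ p ∈ Ω, ∀ i : Fin n2,
          fderiv ℝ C p ((Pi.single (i, j) 1 : (Fin n2 × Fin n1) → ℝ), 0) = 0 ∧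
          fderiv ℝ C p (0, (Pi.single i 1 : (Fin n2) → ℝ)) = -(p.1 (i, j)) :=
  no_conserved_quantity_for_translation_symmetry_general hn2 j Ω hopen hne
end

section
/- For every matrix A ∈ ℝ^{m×d} with rank r, there exist matrices U ∈ ℝ^{m×(r+1)} and V ∈ ℝ^{(r+1)×d} with all entries of V nonnegative such that A = UV. Equivalently, the nonnegative column rank satisfies nncr(A) ≤ rank(A) + 1. -/
/-!
Factor `A = B * C` through its column space, with inner dimension `rank A`. Adding to each
row of `C` a constant `t i` large enough makes it nonnegative; the error `B * vecMulVec t 1`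
has rank one, so it is cancelled by one extra column `-B t` of `U` against one extra row of
ones in `V`.
-/

open Matrix

theorem Matrix.exists_rank_factorization {K m n : Type*} [Field K] [Fintype m] [Fintype n]
    [DecidableEq n] (A : Matrix m n K) :
    ∃ (B : Matrix m (Fin A.rank) K) (C : Matrix (Fin A.rank) n K), A = B * C := by
  let b : Module.Basis (Fin A.rank) K (LinearMap.range A.mulVecLin) :=
    Module.finBasisOfFinrankEq K _ rfl
  refine ⟨LinearMap.toMatrix b (Pi.basisFun K m) (LinearMap.range A.mulVecLin).subtype,
    LinearMap.toMatrix (Pi.basisFun K n) b A.mulVecLin.rangeRestrict, ?_⟩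
  rw [← LinearMap.toMatrix_comp]
  exact (LinearMap.toMatrix_toLin _ _ A).symm

theorem Matrix.exists_mul_eq_mul_nonneg {R l m n : Type*} [Ring R] [LinearOrder R]
    [IsOrderedRing R] [Fintype m] [Fintype n] (B : Matrix l m R) (C : Matrix m n R) :
    ∃ (U : Matrix l (m ⊕ Fin 1) R) (V : Matrix (m ⊕ Fin 1) n R),
      (∀ i j, 0 ≤ V i j) ∧ B * C = U * V := by
  let t : m → R := fun i => ∑ j, |C i j|
  have hshift : ∀ i j, 0 ≤ C i j + t i := fun i j =>
    neg_le_iff_add_nonneg'.mp <| (neg_le_abs _).trans <|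
      Finset.single_le_sum (f := fun j => |C i j|) (fun _ _ => abs_nonneg _) (Finset.mem_univ j)
  refine ⟨fromCols B (replicateCol (Fin 1) (-(B *ᵥ t))),
    fromRows (C + vecMulVec t 1) (replicateRow (Fin 1) 1), ?_, ?_⟩
  · rintro (i | _) j
    · simpa [vecMulVec_apply] using hshift i j
    · exact zero_le_one
  · have hlast : replicateCol (Fin 1) (-(B *ᵥ t)) * replicateRow (Fin 1) (1 : n → R) =
        vecMulVec (-(B *ᵥ t)) 1 :=
      (vecMulVec_eq _ _ _).symm
    rw [fromCols_mul_fromRows, hlast, Matrix.mul_add, mul_vecMulVec, neg_vecMulVec]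
    abel

/-- every real matrix `A` of rank `r` admits a factorization `A = U * V` with
inner dimension `r + 1` where all entries of `V` are nonnegative; i.e. `nncr(A) ≤ rank(A) + 1`. -/
theorem nncr_le_rank_add_one {m d : ℕ} (A : Matrix (Fin m) (Fin d) ℝ) :
    ∃ (U : Matrix (Fin m) (Fin (A.rank + 1)) ℝ) (V : Matrix (Fin (A.rank + 1)) (Fin d) ℝ),
      (∀ i j, 0 ≤ V i j) ∧ A = U * V := by
  obtain ⟨B, C, hA⟩ := A.exists_rank_factorization
  obtain ⟨U, V, hV, hUV⟩ := B.exists_mul_eq_mul_nonneg C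
  refine ⟨U.submatrix id finSumFinEquiv.symm, V.submatrix finSumFinEquiv.symm id,
    fun _ _ => hV _ _, ?_⟩
  rw [submatrix_mul_equiv, ← hUV, ← hA, submatrix_id_id]
end

section
/- Let v_1, …, v_N ∈ ℝ^m and let C = { Σ_{i=1}^N λ_i v_i : λ_i ≥ 0 } be their conic hull. Then C is pointed, i.e., C ∩ (−C) = {0}, if and only if there exist m linearly independent vectors w_1, …, w_m ∈ ℝ^m such that C ⊆ { Σ_{i=1}^m μ_i w_i : μ_i ≥ 0 }, i.e., C is contained in a simplicial cone. -/
/-!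
Since the cone is pointed, `0` is not in the convex hull of the nonzero generators, so by
Hahn–Banach some functional `F` is positive on all of them. For large `t` the map
`x ↦ x + t F(x) (1, …, 1)` then sends every generator into the nonnegative orthant, and it is
injective for `t` or `2 t`; the cone therefore lies in the preimage of the orthant, which is the
simplicial cone spanned by the preimages of the standard basis. Conversely, coordinates with
respect to a basis show that a simplicial cone is pointed.
-/

/-- The conic hull of finitely many vectors `v_1, …, v_N` in `ℝ^m`. -/
def conicHullOf {m N : ℕ} (v : Fin N → (Fin m → ℝ)) : Set (Fin m → ℝ) :=
  {x | ∃ lam : Fin N → ℝ, (∀ i, 0 ≤ lam i) ∧ x = ∑ i, lam i • v i}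

open Set Filter

theorem PointedCone.convex_sdiff_singleton_zero {𝕜 E : Type*} [Field 𝕜] [LinearOrder 𝕜]
    [IsStrictOrderedRing 𝕜] [AddCommGroup E] [Module 𝕜 E] {C : PointedCone 𝕜 E}
    (hC : (C : ConvexCone 𝕜 E).Salient) : Convex 𝕜 ((C : Set E) \ {0}) := by
  rintro x ⟨hx, hx0⟩ y ⟨hy, hy0⟩ a b ha hb hab
  refine ⟨C.convex hx hy ha hb hab, fun h0 => ?_⟩
  rw [mem_singleton_iff] at h0 hx0 hy0
  rcases ha.eq_or_lt with rfl | ha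
  · simp_all
  · exact hC (a • x) (C.smul_mem ha.le hx) (smul_ne_zero ha.ne' hx0)
      (by rw [neg_eq_of_add_eq_zero_right h0]; exact C.smul_mem hb hy)

theorem PointedCone.exists_strongDual_pos_of_salient {E : Type*} [NormedAddCommGroup E]
    [NormedSpace ℝ E] {C : PointedCone ℝ E} (hC : (C : ConvexCone ℝ E).Salient) {s : Set E}
    (hs : s.Finite) (hsC : s ⊆ (C : Set E) \ {0}) : ∃ f : StrongDual ℝ E, ∀ x ∈ s, 0 < f x := by
  have h0 : (0 : E) ∉ convexHull ℝ s := fun h =>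
    (convexHull_min hsC (convex_sdiff_singleton_zero hC) h).2 rfl
  obtain ⟨f, u, hf0, hfs⟩ :=
    geometric_hahn_banach_point_closed (convex_convexHull ℝ s) (hs.isClosed_convexHull ℝ) h0
  exact ⟨f, fun x hx => (map_zero f ▸ hf0).trans (hfs x (subset_convexHull ℝ s hx))⟩

theorem LinearMap.injective_id_add_smulRight {K V : Type*} [Field K] [AddCommGroup V]
    [Module K V] (f : V →ₗ[K] K) (d : V) (hd : 1 + f d ≠ 0) :
    Function.Injective ((LinearMap.id : V →ₗ[K] V) + f.smulRight d) := by
  refine (injective_iff_map_eq_zero _).2 fun x hx => ?_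
  simp only [LinearMap.add_apply, LinearMap.id_apply, LinearMap.smulRight_apply] at hx
  have hfx : f x * (1 + f d) = 0 := by
    have := congrArg f hx
    rw [map_add, map_smul, smul_eq_mul, map_zero] at this
    linear_combination this
  rw [(mul_eq_zero.mp hfx).resolve_right hd, zero_smul, add_zero] at hx
  exact hx

section ConicHull

variable {m N : ℕ}

theorem mem_conicHullOf_iff_mem_hull {v : Fin N → (Fin m → ℝ)} {x : Fin m → ℝ} :
    x ∈ conicHullOf v ↔ x ∈ PointedCone.hull ℝ (range v) := by
  rw [Submodule.mem_span_range_iff_exists_fun]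
  constructor
  · rintro ⟨lam, hlam, rfl⟩
    exact ⟨fun i => ⟨lam i, hlam i⟩, rfl⟩
  · rintro ⟨c, rfl⟩
    exact ⟨fun i => c i, fun i => (c i).2, rfl⟩

theorem exists_linearMap_pos_of_pointed (v : Fin N → (Fin m → ℝ))
    (hv : ∀ x ∈ conicHullOf v, -x ∈ conicHullOf v → x = 0) :
    ∃ F : (Fin m → ℝ) →ₗ[ℝ] ℝ, ∀ i, v i ≠ 0 → 0 < F (v i) := by
  have hC : (PointedCone.hull ℝ (range v) : ConvexCone ℝ (Fin m → ℝ)).Salient :=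
    fun x hx hx0 hnx => hx0 (hv x (mem_conicHullOf_iff_mem_hull.2 hx)
      (mem_conicHullOf_iff_mem_hull.2 hnx))
  obtain ⟨f, hf⟩ := PointedCone.exists_strongDual_pos_of_salient hC (finite_range v).sdiff
    (sdiff_subset_sdiff_left PointedCone.subset_hull)
  exact ⟨f, fun i hi => hf (v i) ⟨mem_range_self i, hi⟩⟩

theorem exists_injective_nonneg_of_pos (v : Fin N → (Fin m → ℝ))
    (F : (Fin m → ℝ) →ₗ[ℝ] ℝ) (hF : ∀ i, v i ≠ 0 → 0 < F (v i)) :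
    ∃ Φ : (Fin m → ℝ) →ₗ[ℝ] (Fin m → ℝ), Function.Injective Φ ∧ ∀ i, 0 ≤ Φ (v i) := by
  have hev : ∀ᶠ s : ℝ in atTop, ∀ i k, 0 ≤ v i k + s * F (v i) := by
    refine eventually_all.2 fun i => eventually_all.2 fun k => ?_
    by_cases hvi : v i = 0
    · simp [hvi]
    · exact (tendsto_atTop_add_const_left _ _
        (tendsto_id.atTop_mul_const (hF i hvi))).eventually_ge_atTop 0
  -- `1 + s * F 1` and `1 + 2 * s * F 1` cannot both vanish, so `s` or `2 * s` will do.
  obtain ⟨t, ht, ht1⟩ : ∃ t : ℝ, (∀ i k, 0 ≤ v i k + t * F (v i)) ∧ 1 + t * F 1 ≠ 0 := by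
    obtain ⟨s, hs, h2s⟩ := (hev.and ((tendsto_id.const_mul_atTop two_pos).eventually hev)).exists
    by_cases h : 1 + s * F 1 = 0
    · exact ⟨2 * s, h2s, by linarith⟩
    · exact ⟨s, hs, h⟩
  refine ⟨_, (t • F).injective_id_add_smulRight 1 (by simpa using ht1), fun i k => ?_⟩
  simpa [mul_comm] using ht i k

theorem conicHullOf_subset_ofEquivFun {v : Fin N → (Fin m → ℝ)}
    (e : (Fin m → ℝ) ≃ₗ[ℝ] (Fin m → ℝ)) (he : ∀ i, 0 ≤ e (v i)) :
    conicHullOf v ⊆ conicHullOf (Module.Basis.ofEquivFun e) := by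
  rintro _ ⟨lam, hlam, rfl⟩
  refine ⟨e (∑ i, lam i • v i), fun k => ?_, ?_⟩
  · have : 0 ≤ e (∑ i, lam i • v i) := by
      rw [map_sum]
      exact Finset.sum_nonneg fun i _ => by rw [map_smul]; exact smul_nonneg (hlam i) (he i)
    exact this k
  · simpa only [Module.Basis.equivFun_ofEquivFun] using
      ((Module.Basis.ofEquivFun e).sum_equivFun (∑ i, lam i • v i)).symm

theorem eq_zero_of_mem_conicHullOf_of_neg_mem {w : Fin N → (Fin m → ℝ)}
    (hw : LinearIndependent ℝ w) {x : Fin m → ℝ} (hx : x ∈ conicHullOf w)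
    (hnx : -x ∈ conicHullOf w) : x = 0 := by
  obtain ⟨μ, hμ, rfl⟩ := hx
  obtain ⟨ν, hν, hνx⟩ := hnx
  have hsum : ∑ i, (μ i + ν i) • w i = 0 := by
    simp only [add_smul, Finset.sum_add_distrib, ← hνx, add_neg_cancel]
  have hμ0 : ∀ i, μ i = 0 := fun i => by
    linarith [Fintype.linearIndependent_iff.mp hw _ hsum i, hμ i, hν i]
  simp [hμ0]

end ConicHull

/-- the conic hull `C` of `v_1, …, v_N` is pointed (`C ∩ (−C) = {0}`) iff it is
contained in a simplicial cone, i.e. the set of nonnegative combinations of `m` linearly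
independent vectors of `ℝ^m`. -/
theorem pointed_iff_subset_simplicial_cone {m N : ℕ} (v : Fin N → (Fin m → ℝ)) :
    (∀ x ∈ conicHullOf v, -x ∈ conicHullOf v → x = 0)
    ↔ ∃ w : Fin m → (Fin m → ℝ), LinearIndependent ℝ w ∧
        conicHullOf v ⊆ {y | ∃ μ : Fin m → ℝ, (∀ i, 0 ≤ μ i) ∧ y = ∑ i, μ i • w i} := by
  constructor
  · intro hv
    obtain ⟨F, hF⟩ := exists_linearMap_pos_of_pointed v hv
    obtain ⟨Φ, hΦ, hΦv⟩ := exists_injective_nonneg_of_pos v F hF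
    let e := LinearEquiv.ofInjectiveEndo Φ hΦ
    exact ⟨Module.Basis.ofEquivFun e, (Module.Basis.ofEquivFun e).linearIndependent,
      conicHullOf_subset_ofEquivFun e hΦv⟩
  · rintro ⟨w, hw, hvw⟩ x hx hnx
    exact eq_zero_of_mem_conicHullOf_of_neg_mem hw (hvw hx) (hvw hnx)
end

section
/- Let g : ℝ^{n0} → ℝ^{n2} be any function, let W3 ∈ ℝ^{n3×n2} and b3 ∈ ℝ^{n3} be such that every entry of W3·g(x) + b3 is nonnegative for all x ∈ ℝ^{n0}, and let X ∈ ℝ^{n3×n3} be an invertible matrix with all entries nonnegative. Then for all W4 ∈ ℝ^{m×n3}, b4 ∈ ℝ^m, and all x ∈ ℝ^{n0}: W4·[W3·g(x) + b3]_+ + b4 = (W4·X^{−1})·[X·W3·g(x) + X·b3]_+ + b4. In particular, when the last hidden ReLU layer acts linearly on the image of the preceding layers, the transformation (W3, b3, W4) ↦ (X·W3, X·b3, W4·X^{−1}) leaves the realized network function unchanged. -/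
open Matrix

noncomputable section

/-- if the last hidden ReLU layer acts linearly on the image of the preceding
layers (its preactivation is entrywise nonnegative there), then for any invertible matrix `X`
with nonnegative entries, the transformation `(W3, b3, W4) ↦ (X·W3, X·b3, W4·X⁻¹)` leaves the
realized network function unchanged. -/
theorem gl_action_on_linear_last_layer {n0 n2 n3 m : ℕ}
    (g : (Fin n0 → ℝ) → (Fin n2 → ℝ))
    (W3 : Matrix (Fin n3) (Fin n2) ℝ) (b3 : Fin n3 → ℝ)
    (hnn : ∀ x : Fin n0 → ℝ, ∀ i : Fin n3, 0 ≤ (W3 *ᵥ g x + b3) i)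
    (X : Matrix (Fin n3) (Fin n3) ℝ) (hX : IsUnit X) (hXnn : ∀ i k, 0 ≤ X i k)
    (W4 : Matrix (Fin m) (Fin n3) ℝ) (b4 : Fin m → ℝ) (x : Fin n0 → ℝ) :
    W4 *ᵥ relu (W3 *ᵥ g x + b3) + b4
      = (W4 * X⁻¹) *ᵥ relu ((X * W3) *ᵥ g x + X *ᵥ b3) + b4 := by
  set v := W3 *ᵥ g x + b3 with hv
  have h1 : relu v = v := by
    funext i; exact max_eq_left (hnn x i)
  have h2 : (X * W3) *ᵥ g x + X *ᵥ b3 = X *ᵥ v := by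
    rw [hv, mulVec_add, mulVec_mulVec]
  have h3 : relu (X *ᵥ v) = X *ᵥ v := by
    funext i
    simp only [relu, mulVec, dotProduct]
    refine max_eq_left (Finset.sum_nonneg fun k _ => ?_)
    exact mul_nonneg (hXnn i k) (hnn x k)
  rw [h1, h2, h3, mulVec_mulVec, Matrix.mul_assoc, Matrix.nonsing_inv_mul X
    (isUnit_iff_isUnit_det X |>.mp hX), Matrix.mul_one]
end
end
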